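/- Let K_{p_1,…,p_r} (r ≥ 2) be the complete r-partite graph with n = p_1+⋯+p_r vertices and Laplacian L. For any vertex u, det(L(u|u)) = n^{r−2} · ∏_{i=1}^r (n − p_i)^{p_i − 1}; by the matrix-tree theorem this is the number of spanning trees of K_{p_1,…,p_r}. -/

import Mathlib

open BigOperators Matrix Finset

/- ### Rank-one update determinant lemmas -/

lemma det_one_sub_vecMulVec {m : Type*} [Fintype m] [DecidableEq m] (v d : m → ℝ) :
    (1 - Matrix.vecMulVec v d).det = 1 - d ⬝ᵥ v := by
  have h : (1 : Matrix m m ℝ) - Matrix.vecMulVec v d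
      = 1 + Matrix.replicateCol Unit (-v) * Matrix.replicateRow Unit d := by
    rw [vecMulVec_eq Unit]
    ext i j
    simp [Matrix.replicateCol, Matrix.replicateRow, mul_apply]
    ring
  rw [h, Matrix.det_one_add_replicateCol_mul_replicateRow]
  simp [dotProduct]
  ring

lemma mul_vecMulVec {m : Type*} [Fintype m] (A : Matrix m m ℝ) (v d : m → ℝ) :
    A * Matrix.vecMulVec v d = Matrix.vecMulVec (A *ᵥ v) d := by
  ext i j
  simp [mul_apply, vecMulVec_apply, mulVec, dotProduct, Finset.sum_mul, mul_assoc]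

lemma det_sub_vecMulVec {m : Type*} [Fintype m] [DecidableEq m]
    (A B : Matrix m m ℝ) (hAB : A * B = 1) (c d : m → ℝ) :
    (A - Matrix.vecMulVec c d).det = A.det * (1 - d ⬝ᵥ (B *ᵥ c)) := by
  have h : A - Matrix.vecMulVec c d = A * (1 - Matrix.vecMulVec (B *ᵥ c) d) := by
    rw [Matrix.mul_sub, mul_one, _root_.mul_vecMulVec, Matrix.mulVec_mulVec, hAB, Matrix.one_mulVec]
  rw [h, Matrix.det_mul, det_one_sub_vecMulVec]

/- ### The blocks `a•I + J` -/

noncomputable def Nmat (a : ℝ) (q : ℕ) : Matrix (Fin q) (Fin q) ℝ :=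
  Matrix.of fun x y => (if x = y then a else 0) + 1

noncomputable def Bmat (a : ℝ) (q : ℕ) : Matrix (Fin q) (Fin q) ℝ :=
  Matrix.of fun x y => (if x = y then a⁻¹ else 0) - (a * (a + q))⁻¹

lemma Nmat_eq (a : ℝ) (q : ℕ) :
    Nmat a q = a • (1 : Matrix (Fin q) (Fin q) ℝ) - Matrix.vecMulVec (fun _ => (-1:ℝ)) 1 := by
  ext x y
  simp [Nmat, vecMulVec_apply, Matrix.one_apply, smul_ite]

lemma det_Nmat (a : ℝ) (q : ℕ) (ha : a ≠ 0) :
    (Nmat a q).det = a ^ q + q * a ^ (q - 1) := by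
  rw [Nmat_eq, det_sub_vecMulVec (a • 1) (a⁻¹ • 1) (by
    rw [Matrix.smul_mul, Matrix.mul_smul, one_mul, smul_smul, mul_inv_cancel₀ ha, one_smul])]
  rw [Matrix.det_smul, Matrix.det_one, mul_one]
  simp [Matrix.smul_mulVec, dotProduct, Finset.mul_sum]
  cases q with
  | zero => simp
  | succ k =>
    simp [pow_succ]
    field_simp

lemma Nmat_mul_Bmat (a : ℝ) (q : ℕ) (ha : a ≠ 0) (haq : a + q ≠ 0) :
    Nmat a q * Bmat a q = 1 := by
  ext x y
  simp only [mul_apply, Nmat, Bmat, Matrix.of_apply, Matrix.one_apply]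
  have : ∀ k : Fin q, ((if x = k then a else 0) + 1) * ((if k = y then a⁻¹ else 0) - (a * (a + q))⁻¹)
      = (if x = k then a else 0) * (if k = y then a⁻¹ else 0)
        - (if x = k then a else 0) * (a * (a + q))⁻¹
        + ((if k = y then a⁻¹ else 0) - (a * (a + q))⁻¹) := fun k => by ring
  simp_rw [this, Finset.sum_add_distrib, Finset.sum_sub_distrib, ite_mul, zero_mul,
    mul_ite, mul_zero, Finset.sum_ite_eq, Finset.sum_ite_eq', Finset.sum_const,
    Finset.card_univ, Fintype.card_fin, if_pos (Finset.mem_univ _)]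
  rw [mul_inv_cancel₀ ha]
  rcases eq_or_ne x y with h | h <;> simp [h] <;> field_simp <;> ring

lemma Bmat_row_sum (a : ℝ) (q : ℕ) (ha : a ≠ 0) (haq : a + q ≠ 0) (x : Fin q) :
    ∑ y, Bmat a q x y = (a + q)⁻¹ := by
  simp [Bmat, Finset.sum_sub_distrib, Finset.sum_ite_eq']
  field_simp
  ring

/- ### Block diagonal determinants over sigma types -/

def blockEquiv {r : ℕ} (q : Fin r → ℕ) (k : Fin r) :
    Fin (q k) ≃ {a : Σ i, Fin (q i) // Sigma.fst a = k} where
  toFun := fun x => ⟨⟨k, x⟩, rfl⟩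
  invFun := fun a => Fin.cast (congrArg q a.2) a.val.2
  left_inv := fun x => rfl
  right_inv := fun a => by
    rcases a with ⟨⟨i, x⟩, h⟩
    subst h
    rfl

lemma det_blockDiagonal'_fin {r : ℕ} {q : Fin r → ℕ}
    (N : ∀ i, Matrix (Fin (q i)) (Fin (q i)) ℝ) :
    (Matrix.blockDiagonal' N).det = ∏ i, (N i).det := by
  rw [(Matrix.blockTriangular_blockDiagonal' N).det_fintype]
  refine Finset.prod_congr rfl fun k _ => ?_
  rw [← Matrix.det_submatrix_equiv_self (blockEquiv q k)]
  congr 1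
  ext x y
  simp [Matrix.toSquareBlock, Matrix.toSquareBlockProp, blockEquiv]

lemma ones_dot_blockDiagonal'_mulVec_ones {r : ℕ} {q : Fin r → ℕ}
    (B : ∀ i, Matrix (Fin (q i)) (Fin (q i)) ℝ) :
    (fun _ => (1:ℝ)) ⬝ᵥ (Matrix.blockDiagonal' B *ᵥ fun _ => 1) = ∑ i, ∑ x, ∑ y, B i x y := by
  simp only [dotProduct, mulVec, one_mul, mul_one]
  have h : ∀ a : Σ i, Fin (q i), ∑ b, Matrix.blockDiagonal' B a b = ∑ y, B a.1 a.2 y := by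
    rintro ⟨i, x⟩
    rw [← Finset.univ_sigma_univ, Finset.sum_sigma, Finset.sum_eq_single i]
    · exact Finset.sum_congr rfl fun y _ => Matrix.blockDiagonal'_apply_eq B i x y
    · intro j _ hj
      exact Finset.sum_eq_zero fun y _ => Matrix.blockDiagonal'_apply_ne B x y (Ne.symm hj)
    · simp
  simp_rw [h]
  rw [← Finset.univ_sigma_univ, Finset.sum_sigma]

/- ### Extensionality for sigma-of-Fin -/

lemma sigma_fin_ext_iff {r : ℕ} {g : Fin r → ℕ} {a b : Σ i, Fin (g i)} :
    a = b ↔ a.1 = b.1 ∧ (a.2 : ℕ) = (b.2 : ℕ) := by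
  constructor
  · rintro rfl; exact ⟨rfl, rfl⟩
  · rintro ⟨h1, h2⟩
    exact Sigma.ext h1 ((Fin.heq_ext_iff (congrArg g h1)).mpr h2)

/- ### The vertex-deleted index set -/

def qfun {r : ℕ} (p : Fin r → ℕ) (i₀ : Fin r) : Fin r → ℕ :=
  fun i => if i = i₀ then p i - 1 else p i

def fmap {r : ℕ} (p : Fin r → ℕ) (u : Σ i, Fin (p i)) (hp1 : 0 < p u.1)
    (a : Σ i, Fin (qfun p u.1 i)) : Σ i, Fin (p i) :=
  if h : a.1 = u.1 then
    ⟨u.1, Fin.cast (Nat.succ_pred_eq_of_pos hp1)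
      ((Fin.cast (Nat.succ_pred_eq_of_pos hp1).symm u.2).succAbove
        (Fin.cast (by rw [h]; simp [qfun]) a.2))⟩
  else ⟨a.1, Fin.cast (by simp [qfun, h]) a.2⟩

lemma fmap_fst {r : ℕ} (p : Fin r → ℕ) (u : Σ i, Fin (p i)) (hp1 : 0 < p u.1)
    (a : Σ i, Fin (qfun p u.1 i)) : (fmap p u hp1 a).1 = a.1 := by
  unfold fmap
  split
  · next h => exact h.symm
  · rfl

lemma val_succAbove {m : ℕ} (c : Fin (m + 1)) (x : Fin m) :
    ((c.succAbove x : Fin (m+1)) : ℕ) = if (x : ℕ) < (c : ℕ) then (x : ℕ) else (x : ℕ) + 1 := by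
  by_cases hx : (x : ℕ) < (c : ℕ)
  · rw [if_pos hx, Fin.succAbove, if_pos (by simpa [Fin.lt_def] using hx)]
    simp
  · rw [if_neg hx, Fin.succAbove, if_neg (by simpa [Fin.lt_def] using hx)]
    simp

lemma fmap_val {r : ℕ} (p : Fin r → ℕ) (u : Σ i, Fin (p i)) (hp1 : 0 < p u.1)
    (a : Σ i, Fin (qfun p u.1 i)) :
    ((fmap p u hp1 a).2 : ℕ) =
      if a.1 = u.1 then (if (a.2 : ℕ) < (u.2 : ℕ) then (a.2 : ℕ) else (a.2 : ℕ) + 1)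
      else (a.2 : ℕ) := by
  unfold fmap
  by_cases h : a.1 = u.1
  · rw [dif_pos h, if_pos h]
    simp [val_succAbove]
  · rw [dif_neg h, if_neg h]
    simp

lemma fmap_ne {r : ℕ} (p : Fin r → ℕ) (u : Σ i, Fin (p i)) (hp1 : 0 < p u.1)
    (a : Σ i, Fin (qfun p u.1 i)) : fmap p u hp1 a ≠ u := by
  intro hcon
  rw [sigma_fin_ext_iff] at hcon
  obtain ⟨h1, h2⟩ := hcon
  rw [fmap_fst] at h1
  rw [fmap_val, if_pos h1] at h2
  split at h2 <;> omega

lemma fmap_inj {r : ℕ} (p : Fin r → ℕ) (u : Σ i, Fin (p i)) (hp1 : 0 < p u.1) :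
    Function.Injective (fmap p u hp1) := by
  intro a b hab
  rw [sigma_fin_ext_iff] at hab
  obtain ⟨h1, h2⟩ := hab
  rw [fmap_fst, fmap_fst] at h1
  rw [fmap_val, fmap_val] at h2
  obtain ⟨i, x⟩ := a
  obtain ⟨j, y⟩ := b
  dsimp at h1 h2
  subst h1
  refine sigma_fin_ext_iff.mpr ⟨rfl, ?_⟩
  dsimp
  split at h2
  · split at h2 <;> split at h2 <;> omega
  · omega
lemma arith_key (n k r : ℕ) (hr : 2 ≤ r) (hnk : k + 2 ≤ n) :
    (((n:ℝ) - (k+1))^k + k * ((n:ℝ) - (k+1))^(k-1)) * (n:ℝ)^(r-1)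
        * (1 - (k * ((n:ℝ)-1)⁻¹ + ((n:ℝ) - (k+1)) * (n:ℝ)⁻¹))
      = (n:ℝ)^(r-2) * ((n:ℝ) - (k+1))^k := by
  have hn2 : (2:ℝ) ≤ (n:ℝ) := by
    have : (2:ℕ) ≤ n := by omega
    exact_mod_cast this
  have hn0 : (n:ℝ) ≠ 0 := by linarith
  have hn1 : (n:ℝ) - 1 ≠ 0 := by linarith
  have hrw : (n:ℝ)^(r-1) = (n:ℝ)^(r-2) * n := by
    rw [← pow_succ]
    congr 1
    omega
  rw [hrw]
  cases k with
  | zero =>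
    simp only [Nat.cast_zero, pow_zero, zero_mul, zero_add, add_zero, one_mul]
    field_simp
    ring
  | succ j =>
    have h1 : (j + 1 : ℕ) - 1 = j := rfl
    rw [h1, pow_succ]
    push_cast
    field_simp
    ring

/-- For the complete multipartite graph `K_{p₁,…,p_r}` (`r ≥ 2`) with Laplacian `L`
and any vertex `u`, `det(L(u|u)) = n^{r−2} · Πᵢ (n−pᵢ)^{pᵢ−1}`
(the number of spanning trees, by the matrix-tree theorem). -/
theorem det_submatrix_one_vertex
    (r : ℕ) (hr : 2 ≤ r) (p : Fin r → ℕ) (hp : ∀ i, 1 ≤ p i)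
    (n : ℕ) (hn : n = ∑ i, p i)
    (L : Matrix (Σ i : Fin r, Fin (p i)) (Σ i : Fin r, Fin (p i)) ℝ)
    (hL : L = (SimpleGraph.completeMultipartiteGraph fun i : Fin r => Fin (p i)).lapMatrix ℝ)
    (u : Σ i : Fin r, Fin (p i)) :
    Matrix.det
        (L.submatrix
          (Subtype.val : {w : Σ i : Fin r, Fin (p i) // w ≠ u} → Σ i : Fin r, Fin (p i))
          Subtype.val) =
      (n : ℝ) ^ (r - 2) * ∏ i, ((n : ℝ) - p i) ^ (p i - 1) := by
  subst hL
  set G := SimpleGraph.completeMultipartiteGraph fun i : Fin r => Fin (p i) with hG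
  -- numeric facts
  have hple : ∀ i, p i ≤ n := fun i =>
    hn ▸ Finset.single_le_sum (fun j _ => Nat.zero_le _) (Finset.mem_univ i)
  have hpn : ∀ i, p i + 1 ≤ n := by
    intro i
    have hnt : Nontrivial (Fin r) :=
      ⟨⟨⟨0, by omega⟩, ⟨1, by omega⟩, by simp [Fin.ext_iff]⟩⟩
    obtain ⟨j, hj⟩ := exists_ne i
    have hji : j ∈ Finset.univ.erase i := Finset.mem_erase.mpr ⟨hj, Finset.mem_univ j⟩
    have h1 : p j ≤ ∑ k ∈ Finset.univ.erase i, p k :=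
      Finset.single_le_sum (fun k _ => Nat.zero_le _) hji
    have h2 : ∑ k ∈ Finset.univ.erase i, p k + p i = ∑ k, p k :=
      Finset.sum_erase_add _ _ (Finset.mem_univ i)
    have := hp j
    omega
  have hn2 : 2 ≤ n := by have := hpn u.1; have := hp u.1; omega
  have hn0 : (n:ℝ) ≠ 0 := by
    have : (0:ℝ) < n := by exact_mod_cast Nat.lt_of_lt_of_le (by omega) hn2
    linarith
  have hn1 : (n:ℝ) - 1 ≠ 0 := by
    have : (2:ℝ) ≤ (n:ℝ) := by exact_mod_cast hn2
    linarith
  -- adjacency and degree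
  have hadj : ∀ v w : Σ i : Fin r, Fin (p i), G.Adj v w ↔ v.1 ≠ w.1 := fun v w => Iff.rfl
  have hcardfib : ∀ k : Fin r,
      Fintype.card {a : Σ i : Fin r, Fin (p i) // a.1 = k} = p k := fun k =>
    ((Fintype.card_congr (blockEquiv p k)).symm).trans (Fintype.card_fin _)
  have hcardall : Fintype.card (Σ i : Fin r, Fin (p i)) = n := by
    simp [Fintype.card_sigma, hn]
  have hdeg : ∀ v : Σ i : Fin r, Fin (p i), G.degree v = n - p v.1 := by
    intro v
    rw [← SimpleGraph.card_neighborSet_eq_degree]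
    have h1 : Fintype.card (G.neighborSet v)
        = Fintype.card {w : Σ i : Fin r, Fin (p i) // ¬ (w.1 = v.1)} :=
      Fintype.card_congr (Equiv.subtypeEquivRight fun w => by
        simpa [SimpleGraph.mem_neighborSet, hadj v w] using ne_comm)
    rw [h1, Fintype.card_subtype_compl, hcardall, hcardfib]
  -- Laplacian entries
  have hLent : ∀ v w : Σ i : Fin r, Fin (p i), G.lapMatrix ℝ v w
      = (if v = w then (n:ℝ) - p v.1 else 0) + (if v.1 = w.1 then 1 else 0) - 1 := by
    intro v w
    simp only [SimpleGraph.lapMatrix, SimpleGraph.degMatrix, SimpleGraph.adjMatrix,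
      Matrix.sub_apply, Matrix.of_apply]
    by_cases hvw : v = w
    · subst hvw
      have hnA : ¬ G.Adj v v := G.loopless.irrefl v
      simp only [Matrix.diagonal_apply_eq, hnA, if_false, if_true, sub_zero,
        eq_self_iff_true, if_pos rfl]
      rw [hdeg v, Nat.cast_sub (hple v.1)]
      ring
    · rcases eq_or_ne v.1 w.1 with h | h
      · have hna : ¬ G.Adj v w := by rw [hadj]; simpa using h
        simp [hvw, h, hna]
      · have hA : G.Adj v w := (hadj v w).mpr h
        simp [hvw, h, hA]
  -- the equivalence between Σ i, Fin (q i) and the deleted vertex set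
  have hp1 : 0 < p u.1 := hp u.1
  set q : Fin r → ℕ := qfun p u.1 with hq
  have hqerase : ∀ i, i ≠ u.1 → q i = p i := fun i hi => by simp [hq, qfun, hi]
  have hsumq : ∑ i, q i + 1 = n := by
    have h1 : q u.1 + ∑ i ∈ Finset.univ.erase u.1, q i = ∑ i, q i :=
      Finset.add_sum_erase _ _ (Finset.mem_univ u.1)
    have h2 : p u.1 + ∑ i ∈ Finset.univ.erase u.1, p i = ∑ i, p i :=
      Finset.add_sum_erase _ _ (Finset.mem_univ u.1)
    have h3 : ∑ i ∈ Finset.univ.erase u.1, q i = ∑ i ∈ Finset.univ.erase u.1, p i :=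
      Finset.sum_congr rfl fun i hi => hqerase i (Finset.mem_erase.mp hi).1
    have h4 : q u.1 = p u.1 - 1 := by simp [hq, qfun]
    omega
  have hcards : Fintype.card (Σ i, Fin (q i))
      = Fintype.card {w : Σ i : Fin r, Fin (p i) // w ≠ u} := by
    have h0 : Fintype.card {w : Σ i : Fin r, Fin (p i) // w ≠ u}
        = Fintype.card {w : Σ i : Fin r, Fin (p i) // ¬ (w = u)} :=
      Fintype.card_congr (Equiv.subtypeEquivRight fun w => Iff.rfl)
    have h1 : Fintype.card {w : Σ i : Fin r, Fin (p i) // w ≠ u}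
        = Fintype.card (Σ i : Fin r, Fin (p i)) - 1 := by
      rw [h0, Fintype.card_subtype_compl, Fintype.card_subtype_eq]
    rw [h1, hcardall, Fintype.card_sigma]
    simp only [Fintype.card_fin]
    omega
  have hfbij : Function.Bijective
      (fun a => (⟨fmap p u hp1 a, fmap_ne p u hp1 a⟩ :
        {w : Σ i : Fin r, Fin (p i) // w ≠ u})) := by
    rw [Fintype.bijective_iff_injective_and_card]
    exact ⟨fun a b hab => fmap_inj p u hp1 (congrArg Subtype.val hab), hcards⟩
  set e := Equiv.ofBijective _ hfbij with he
  -- the reindexed matrix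
  set a : Fin r → ℝ := fun i => (n:ℝ) - p i with ha
  have hai : ∀ i, a i ≠ 0 := by
    intro i
    have hlt : (p i : ℝ) < n := by exact_mod_cast Nat.lt_of_lt_of_le (by omega) (hpn i)
    have hgt : 0 < a i := by simp only [ha]; linarith
    exact ne_of_gt hgt
  have haqv : ∀ i, a i + (q i : ℝ) = if i = u.1 then (n:ℝ) - 1 else n := by
    intro i
    by_cases h : i = u.1
    · rw [if_pos h, h]
      have h4 : q u.1 = p u.1 - 1 := by simp [hq, qfun]
      rw [h4, Nat.cast_sub (hp u.1)]
      simp only [ha]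
      ring
    · rw [hqerase i h, if_neg h]
      simp [ha]
  have haq : ∀ i, a i + (q i : ℝ) ≠ 0 := by
    intro i
    rw [haqv i]
    split
    · exact hn1
    · exact hn0
  set N : ∀ i, Matrix (Fin (q i)) (Fin (q i)) ℝ := fun i => Nmat (a i) (q i) with hN
  set B : ∀ i, Matrix (Fin (q i)) (Fin (q i)) ℝ := fun i => Bmat (a i) (q i) with hB
  have hsub : ((G.lapMatrix ℝ).submatrix
        (Subtype.val : {w : Σ i : Fin r, Fin (p i) // w ≠ u} → _) Subtype.val).submatrix e e
      = Matrix.blockDiagonal' N - Matrix.vecMulVec (fun _ => 1) (fun _ => 1) := by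
    ext x y
    have hex : ∀ z, ((e z : {w : Σ i : Fin r, Fin (p i) // w ≠ u}) : Σ i : Fin r, Fin (p i))
        = fmap p u hp1 z := fun z => rfl
    simp only [Matrix.submatrix_apply, Matrix.sub_apply, Matrix.vecMulVec_apply, hex, hLent]
    have h1 : (fmap p u hp1 x = fmap p u hp1 y) = (x = y) :=
      propext ⟨fun h => fmap_inj p u hp1 h, fun h => by rw [h]⟩
    simp only [h1, fmap_fst]
    rcases eq_or_ne x.1 y.1 with h | h
    · have hxy : (x = y) = ((x.2 : ℕ) = (y.2 : ℕ)) := by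
        rw [sigma_fin_ext_iff]
        simp [h]
      obtain ⟨i, xx⟩ := x
      obtain ⟨j, yy⟩ := y
      dsimp at h
      subst h
      rw [Matrix.blockDiagonal'_apply_eq]
      simp only [hN, Nmat, Matrix.of_apply]
      simp only [hxy]
      rcases eq_or_ne (xx:ℕ) (yy:ℕ) with hxy2 | hxy2
      · have hfe : xx = yy := Fin.ext hxy2
        rw [if_pos hxy2, if_pos hfe]
        simp only [ha, if_true]
        ring
      · have hfe : xx ≠ yy := fun hc => hxy2 (congrArg Fin.val hc)
        rw [if_neg hxy2, if_neg hfe]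
        norm_num
    · have hxy : x ≠ y := fun hc => h (congrArg Sigma.fst hc)
      obtain ⟨i, xx⟩ := x
      obtain ⟨j, yy⟩ := y
      rw [Matrix.blockDiagonal'_apply_ne _ _ _ h]
      simp [hxy, h]
  -- the determinant
  have hNB : Matrix.blockDiagonal' N * Matrix.blockDiagonal' B = 1 := by
    rw [← Matrix.blockDiagonal'_mul]
    have : (fun i => N i * B i) = fun i => (1 : Matrix (Fin (q i)) (Fin (q i)) ℝ) := by
      funext i
      exact Nmat_mul_Bmat (a i) (q i) (hai i) (haq i)
    rw [this]
    exact Matrix.blockDiagonal'_one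
  rw [← Matrix.det_submatrix_equiv_self e, hsub,
    det_sub_vecMulVec _ _ hNB, det_blockDiagonal'_fin, ones_dot_blockDiagonal'_mulVec_ones]
  have hBsum : ∀ i, (∑ x, ∑ y, B i x y) = (q i : ℝ) * (a i + q i)⁻¹ := by
    intro i
    rw [Finset.sum_congr rfl fun x _ => Bmat_row_sum (a i) (q i) (hai i) (haq i) x]
    simp [Finset.sum_const, mul_comm]
  rw [Finset.sum_congr rfl fun i _ => hBsum i,
    Finset.prod_congr rfl fun i (_ : i ∈ Finset.univ) => det_Nmat (a i) (q i) (hai i)]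
  -- split off the u.1 factor
  rw [← Finset.mul_prod_erase Finset.univ _ (Finset.mem_univ u.1),
    ← Finset.add_sum_erase Finset.univ _ (Finset.mem_univ u.1),
    ← Finset.mul_prod_erase Finset.univ (fun i => a i ^ (p i - 1)) (Finset.mem_univ u.1)]
  have herase1 : ∀ i ∈ Finset.univ.erase u.1,
      a i ^ q i + (q i : ℝ) * a i ^ (q i - 1) = a i ^ (p i - 1) * n := by
    intro i hi
    rw [hqerase i (Finset.mem_erase.mp hi).1]
    obtain ⟨k, hk⟩ : ∃ k, p i = k + 1 := ⟨p i - 1, by have := hp i; omega⟩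
    have hap : a i + ((k:ℝ) + 1) = n := by
      simp only [ha]
      rw [hk]
      push_cast
      ring
    rw [hk]
    simp only [Nat.add_sub_cancel]
    rw [pow_succ]
    push_cast
    linear_combination (a i) ^ k * hap
  have herase2 : ∀ i ∈ Finset.univ.erase u.1,
      (q i : ℝ) * (a i + q i)⁻¹ = (p i : ℝ) * (n:ℝ)⁻¹ := by
    intro i hi
    have hne := (Finset.mem_erase.mp hi).1
    rw [haqv i, if_neg hne, hqerase i hne]
  rw [Finset.prod_congr rfl herase1, Finset.prod_mul_distrib, Finset.prod_const,
    Finset.card_erase_of_mem (Finset.mem_univ u.1), Finset.card_univ, Fintype.card_fin,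
    Finset.sum_congr rfl herase2, ← Finset.sum_mul]
  have hsum_erase : ∑ i ∈ Finset.univ.erase u.1, (p i : ℝ) = (n:ℝ) - p u.1 := by
    have h2 : (p u.1 : ℝ) + ∑ i ∈ Finset.univ.erase u.1, (p i : ℝ) = ∑ i, (p i : ℝ) :=
      Finset.add_sum_erase Finset.univ (fun i => (p i : ℝ)) (Finset.mem_univ u.1)
    have h3 : ((n:ℝ)) = ∑ i, (p i : ℝ) := by exact_mod_cast congrArg Nat.cast hn
    linarith
  rw [hsum_erase, haqv u.1, if_pos rfl]
  -- final arithmetic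
  obtain ⟨k, hk⟩ : ∃ k, p u.1 = k + 1 := ⟨p u.1 - 1, by have := hp u.1; omega⟩
  have hqk : q u.1 = k := by simp [hq, qfun, hk]
  have hA : a u.1 = (n:ℝ) - ((k:ℝ) + 1) := by
    simp only [ha]
    rw [hk]
    push_cast
    ring
  rw [hqk, hk, hA]
  simp only [Nat.add_sub_cancel]
  have harith := arith_key n k r hr (by have := hpn u.1; omega)
  have hnp : (n:ℝ) - ((k:ℝ)+1) = (n:ℝ) - (p u.1 : ℝ) := by rw [hk]; push_cast; ring
  rw [hk] at hnp
  push_cast at hnp ⊢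
  linear_combination (∏ i ∈ Finset.univ.erase u.1, a i ^ (p i - 1)) * harith
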